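/- arXiv:1412.8439 — 4 statements merged into one kernel-verified Lean document; each statement's English description precedes it below -/
import Mathlib

section
/- Consider a time-inhomogeneous random walk (x_t) on the nonnegative integers with x_0 = 0, where at each time t ≥ 1, x_t = x_{t-1} + 1 with probability (x_{t-1}+1)/(t+1) and x_t = x_{t-1} otherwise. Then for every T ≥ 1 and every k ∈ {0, 1, ..., T}, the probability that x_T = k equals 1/(T+1). -/
/-- Time-inhomogeneous random walk on ℕ: `P t k` is the probability that the walk is at
position `k` at time `t`, starting at `P 0 0 = 1`, where at step `t+1` the walk moves from
`x` to `x+1` with probability `(x+1)/(t+2)` and stays otherwise.  Then for every `T ≥ 1`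
and every `k ≤ T`, `P T k = 1/(T+1)`. -/
theorem line_walk_uniform (P : ℕ → ℕ → ℝ)
    (h00 : P 0 0 = 1) (h0 : ∀ k, 0 < k → P 0 k = 0)
    (hrec0 : ∀ t : ℕ, P (t + 1) 0 = P t 0 * (1 - 1 / ((t : ℝ) + 2)))
    (hrec : ∀ t k : ℕ,
      P (t + 1) (k + 1) =
        P t k * (((k : ℝ) + 1) / ((t : ℝ) + 2)) +
        P t (k + 1) * (1 - ((k : ℝ) + 2) / ((t : ℝ) + 2))) :
    ∀ T : ℕ, 1 ≤ T → ∀ k : ℕ, k ≤ T → P T k = 1 / ((T : ℝ) + 1) := by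
  have key : ∀ t : ℕ, (∀ k ≤ t, P t k = 1 / ((t : ℝ) + 1)) ∧ (∀ k, t < k → P t k = 0) := by
    intro t
    induction t with
    | zero =>
      constructor
      · intro k hk; interval_cases k; simpa using h00
      · intro k hk; exact h0 k hk
    | succ t ih =>
      obtain ⟨ih1, ih2⟩ := ih
      have ht : ((t : ℝ) + 1) ≠ 0 := by positivity
      have ht2 : ((t : ℝ) + 2) ≠ 0 := by positivity
      constructor
      · intro k hk
        match k with
        | 0 =>
          rw [hrec0, ih1 0 (Nat.zero_le _)]
          push_cast
          field_simp
          ring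
        | k + 1 =>
          rw [hrec t k, ih1 k (by omega)]
          rcases Nat.lt_or_ge k t with h | h
          · rw [ih1 (k + 1) (by omega)]
            push_cast
            field_simp
            ring
          · have : k = t := by omega
            subst this
            rw [ih2 (k + 1) (by omega)]
            push_cast
            field_simp
            ring
      · intro k hk
        match k with
        | k + 1 =>
          rw [hrec t k, ih2 k (by omega), ih2 (k + 1) (by omega)]
          ring
  intro T _ k hk
  exact (key T).1 k hk
end

section
/- Fix d > 2. Define α_d(t,h) = ((d-1)^{t/2-h+1} - 1)/((d-1)^{t/2+1} - 1) for even t ≥ 2 and 1 ≤ h ≤ t/2. Define vectors p^{(t)} ∈ R^{t/2} for even t by p^{(t)}_h = (d-2)(d-1)^{h-1}/((d-1)^{t/2} - 1). Then p^{(2)} = (1), and for every even t, p^{(t+2)}_h = α_d(t,h) p^{(t)}_h + (1 - α_d(t,h-1)) p^{(t)}_{h-1} for 1 ≤ h ≤ t/2 + 1 (with the conventions p^{(t)}_0 = 0, p^{(t)}_{t/2+1} = 0, and α_d(t,0) arbitrary since multiplied by 0). -/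
/-- Adaptive-diffusion transition probability for `d > 2`, at even time `t = 2m`
and state `h`: `α_d(t,h) = ((d-1)^(m-h+1) - 1)/((d-1)^(m+1) - 1)`. -/
noncomputable def adAlpha (d m h : ℕ) : ℝ :=
  (((d : ℝ) - 1) ^ (m - h + 1) - 1) / (((d : ℝ) - 1) ^ (m + 1) - 1)

/-- Designed source-distance distribution at even time `t = 2m`:
`p^{(t)}_h = (d-2)(d-1)^(h-1)/((d-1)^m - 1)` for `1 ≤ h ≤ m`, and `0` otherwise. -/
noncomputable def adP (d m h : ℕ) : ℝ :=
  if 1 ≤ h ∧ h ≤ m then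
    ((d : ℝ) - 2) * ((d : ℝ) - 1) ^ (h - 1) / (((d : ℝ) - 1) ^ m - 1)
  else 0

/-!
Write `x = d - 1` and `c = (d - 2) / ((x^m - 1)(x^(m+1) - 1))`. The mass that stays at distance
`h` is `α_d(t,h) p^{(t)}_h = c (x^m - x^(h-1))` and the mass that moves on from `h` is
`(1 - α_d(t,h)) p^{(t)}_h = c (x^(m+h) - x^m)`; both formulas stay valid at the boundary states
`h = m + 1` and `h = 0`, where they vanish. Summing the two contributions arriving at `h`
telescopes to `c x^(h-1) (x^m - 1) = p^{(t+2)}_h`.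
-/

theorem adAlpha_mul_adP {d m h : ℕ} (h₁ : 1 ≤ h) (h₂ : h ≤ m + 1) :
    adAlpha d m h * adP d m h =
      ((d : ℝ) - 2) * (((d : ℝ) - 1) ^ m - ((d : ℝ) - 1) ^ (h - 1)) /
        ((((d : ℝ) - 1) ^ m - 1) * (((d : ℝ) - 1) ^ (m + 1) - 1)) := by
  rcases h₂.lt_or_eq with hlt | rfl
  · obtain ⟨k, rfl⟩ : ∃ k, h = k + 1 := ⟨h - 1, by omega⟩
    obtain ⟨j, rfl⟩ : ∃ j, m = k + j + 1 := ⟨m - k - 1, by omega⟩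
    have hexp : k + j + 1 - (k + 1) + 1 = j + 1 := by omega
    rw [adAlpha, adP, if_pos ⟨h₁, by omega⟩, hexp, Nat.add_sub_cancel, div_mul_div_comm,
      mul_comm (_ ^ (k + j + 1 + 1) - 1)]
    congr 1
    ring
  · simp [adP]

theorem one_sub_adAlpha_mul_adP {d m h : ℕ} (hd : ((d : ℝ) - 1) ^ (m + 1) ≠ 1) (h₂ : h ≤ m) :
    (1 - adAlpha d m h) * adP d m h =
      ((d : ℝ) - 2) * (((d : ℝ) - 1) ^ (m + h) - ((d : ℝ) - 1) ^ m) /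
        ((((d : ℝ) - 1) ^ m - 1) * (((d : ℝ) - 1) ^ (m + 1) - 1)) := by
  rcases Nat.eq_zero_or_pos h with rfl | hpos
  · simp [adP]
  · obtain ⟨k, rfl⟩ : ∃ k, h = k + 1 := ⟨h - 1, by omega⟩
    obtain ⟨j, rfl⟩ : ∃ j, m = k + j + 1 := ⟨m - k - 1, by omega⟩
    have hexp : k + j + 1 - (k + 1) + 1 = j + 1 := by omega
    rw [adAlpha, adP, if_pos ⟨hpos, h₂⟩, hexp, Nat.add_sub_cancel, one_sub_div (sub_ne_zero.mpr hd),
      div_mul_div_comm, mul_comm (_ ^ (k + j + 1 + 1) - 1)]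
    congr 1
    ring

/-- For `d > 2`, the initial distribution is `p^{(2)} = (1)`, and the designed
distribution is invariant under the adaptive-diffusion Markov transition:
`p^{(t+2)}_h = α_d(t,h) p^{(t)}_h + (1 - α_d(t,h-1)) p^{(t)}_{h-1}` (with the
conventions `p^{(t)}_0 = 0` and `p^{(t)}_{t/2+1} = 0`). -/
theorem adaptive_diffusion_invariance (d : ℕ) (hd : 2 < d) :
    adP d 1 1 = 1 ∧
    ∀ m : ℕ, 1 ≤ m → ∀ h : ℕ, 1 ≤ h → h ≤ m + 1 →
      adP d (m + 1) h = adAlpha d m h * adP d m h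
        + (1 - adAlpha d m (h - 1)) * adP d m (h - 1) := by
  have hx : (1 : ℝ) < (d : ℝ) - 1 := by
    have : (2 : ℝ) < d := by exact_mod_cast hd
    linarith
  have hpow : ∀ n ≠ 0, ((d : ℝ) - 1) ^ n - 1 ≠ 0 := fun n hn =>
    sub_ne_zero.mpr (one_lt_pow₀ hx hn).ne'
  refine ⟨?_, fun m hm h h₁ h₂ => ?_⟩
  · simpa [adP, sub_sub, one_add_one_eq_two] using div_self (hpow 1 one_ne_zero)
  · have hm₀ : ((d : ℝ) - 1) ^ m - 1 ≠ 0 := hpow m (by omega)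
    have hm₁ : ((d : ℝ) - 1) ^ (m + 1) - 1 ≠ 0 := hpow (m + 1) (by omega)
    rw [adAlpha_mul_adP h₁ h₂, one_sub_adAlpha_mul_adP (sub_ne_zero.mp hm₁) (by omega), adP,
      if_pos ⟨h₁, h₂⟩, ← add_div, pow_add]
    field_simp
    ring
end

section
/- Let d > 2 and even t. Let H be a random variable on {1,...,t/2} with P(H = h) = (d-2)(d-1)^{h-1}/((d-1)^{t/2} - 1). Then E[H] ≥ t/2 - 1/(d-2), and in particular E[H] ≥ (t/2)·(d-1)/d. -/
open Finset

private lemma sum_id (q : ℝ) : ∀ m : ℕ,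
    (q - 1) * ∑ h ∈ Finset.Icc 1 m, (h : ℝ) * ((q - 1) * q ^ (h - 1))
      = (q - 1) * ((m : ℝ) * q ^ m) - (q ^ m - 1) := by
  intro m
  induction m with
  | zero => simp
  | succ n ih =>
    rw [Finset.sum_Icc_succ_top (by omega), mul_add, ih]
    push_cast
    ring

private lemma key_ineq (q : ℝ) (hq : 2 ≤ q) : ∀ m : ℕ, 1 ≤ m →
    ((m : ℝ)) * (q - 1) * (q ^ m + q) ≥ (q ^ m - 1) * (q + 1) := by
  intro m hm
  induction m with
  | zero => omega
  | succ n ih =>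
    rcases Nat.eq_or_lt_of_le hm with h1 | h1
    · simp [← h1]; nlinarith
    · have hn : 1 ≤ n := by omega
      have IH := ih hn
      have hqn : (2:ℝ) ≤ q ^ n := by
        calc (2:ℝ) ≤ q ^ 1 := by simpa using hq
        _ ≤ q ^ n := pow_le_pow_right₀ (by linarith) hn
      have hco : (1:ℝ) ≤ (n : ℝ) * (q - 1) := by
        have : (1:ℝ) ≤ (n : ℝ) := by exact_mod_cast hn
        nlinarith
      have hc1 : (q - 1) * (q ^ n * ((n:ℝ) * (q - 1) - 1)) ≥ 0 := by
        apply mul_nonneg (by linarith)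
        apply mul_nonneg (by positivity) (by linarith)
      have hc2 : (q - 1) * q ≥ 0 := by nlinarith
      rw [pow_succ]
      push_cast
      nlinarith [IH, hc1, hc2]

/-- Let `d > 2`, `t = 2m` even with `m ≥ 1`, and let `H` on `{1,…,m}` have
`P(H = h) = (d-2)(d-1)^(h-1)/((d-1)^m - 1)`.  Then
`E[H] ≥ m - 1/(d-2)` and `E[H] ≥ m(d-1)/d`. -/
theorem adaptive_diffusion_expected_distance (d m : ℕ) (hd : 2 < d) (hm : 1 ≤ m) :
    (∑ h ∈ Finset.Icc 1 m,
        (h : ℝ) * (((d : ℝ) - 2) * ((d : ℝ) - 1) ^ (h - 1) / (((d : ℝ) - 1) ^ m - 1)))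
      ≥ (m : ℝ) - 1 / ((d : ℝ) - 2) ∧
    (∑ h ∈ Finset.Icc 1 m,
        (h : ℝ) * (((d : ℝ) - 2) * ((d : ℝ) - 1) ^ (h - 1) / (((d : ℝ) - 1) ^ m - 1)))
      ≥ (m : ℝ) * ((d : ℝ) - 1) / (d : ℝ) := by
  set q : ℝ := (d : ℝ) - 1 with hqdef
  have hq : 2 ≤ q := by
    have : (3:ℝ) ≤ (d:ℝ) := by exact_mod_cast hd
    rw [hqdef]; linarith
  have hq1 : (0:ℝ) < q - 1 := by linarith
  have hqm : (1:ℝ) < q ^ m := one_lt_pow₀ (by linarith) (by omega)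
  have hden : (0:ℝ) < q ^ m - 1 := by linarith
  have hd2 : (d : ℝ) - 2 = q - 1 := by rw [hqdef]; ring
  have hsum : (∑ h ∈ Finset.Icc 1 m,
        (h : ℝ) * (((d : ℝ) - 2) * ((d : ℝ) - 1) ^ (h - 1) / (((d : ℝ) - 1) ^ m - 1)))
      = (∑ h ∈ Finset.Icc 1 m, (h : ℝ) * ((q - 1) * q ^ (h - 1))) / (q ^ m - 1) := by
    rw [Finset.sum_div]
    refine Finset.sum_congr rfl fun h _ => ?_
    rw [hd2]
    ring
  have hS := sum_id q m
  set S : ℝ := ∑ h ∈ Finset.Icc 1 m, (h : ℝ) * ((q - 1) * q ^ (h - 1)) with hSdef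
  rw [hsum]
  constructor
  · rw [ge_iff_le, hd2, sub_le_iff_le_add,
      div_add_div _ _ (ne_of_gt hden) (ne_of_gt hq1), le_div_iff₀ (by positivity)]
    nlinarith [hS, hqm, mul_nonneg (mul_nonneg (Nat.cast_nonneg m : (0:ℝ) ≤ m) hq1.le) hden.le]
  · have hkey := key_ineq q hq m hm
    have hdq : (d : ℝ) = q + 1 := by rw [hqdef]; ring
    rw [ge_iff_le, hdq, div_le_div_iff₀ (by linarith) hden]
    nlinarith [hS, hkey, hq1]
end

section
/- For d > 2 and T ≥ 1, the number of nodes in the fastest-spreading (deterministic) infection on a d-regular tree at time T is 1 + d((d-1)^T - 1)/(d-2), and the adaptive diffusion infection size at even time T, namely (d(d-1)^{T/2} - 2)/(d-2), reaches n nodes in at most twice the number of timesteps the deterministic spread needs; formally, if deterministic spreading reaches n nodes at time T, then adaptive diffusion reaches at least n nodes by time 2T + 2. -/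
/-- On an infinite `d`-regular tree (`d > 2`), deterministic spreading infects
`1 + d((d-1)^T - 1)/(d-2)` nodes at time `T`, and adaptive diffusion infects
`(d(d-1)^(t/2) - 2)/(d-2)` nodes at even time `t`.  If deterministic spreading reaches
`n` nodes at time `T ≥ 1`, then adaptive diffusion reaches at least `n` nodes by time
`2T + 2`: its spread is order-optimal, within a factor of two. -/
theorem adaptive_diffusion_order_optimal (d T : ℕ) (hd : 2 < d) (hT : 1 ≤ T) (n : ℝ)
    (hn : n ≤ 1 + (d : ℝ) * (((d : ℝ) - 1) ^ T - 1) / ((d : ℝ) - 2)) :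
    n ≤ ((d : ℝ) * ((d : ℝ) - 1) ^ ((2 * T + 2) / 2) - 2) / ((d : ℝ) - 2) := by
  have h2 : (2 * T + 2) / 2 = T + 1 := by omega
  rw [h2]
  have hd3 : (3 : ℝ) ≤ (d : ℝ) := by exact_mod_cast hd
  have hpos : (0 : ℝ) < (d : ℝ) - 2 := by linarith
  have hp1 : (1 : ℝ) ≤ ((d : ℝ) - 1) ^ T := one_le_pow₀ (by linarith : (1:ℝ) ≤ (d:ℝ)-1)
  refine hn.trans ?_
  rw [add_div' _ _ _ hpos.ne', div_le_div_iff₀ hpos hpos, pow_succ]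
  have key : 0 ≤ (d : ℝ) * ((d : ℝ) - 1) ^ T * ((d : ℝ) - 2) ^ 2 := by positivity
  nlinarith [key, hp1, hpos]
end
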